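/- arXiv:1510.02652 — 4 statements merged into one kernel-verified Lean document; each statement's English description precedes it below -/
import Mathlib

section
/- Let k ≥ 1, let n_0 > 1 be real, and suppose 0 ≤ s < 1. Let A_0, …, A_{k−1} be analytic on the unit disk D and satisfy sup_{z∈D} (1−|z|²)^s |A_j(z)| < ∞ for every j = 0, …, k−1. Suppose there exist θ ∈ [0, 2π) and ν ∈ [0,1) such that z_θ = ν e^{iθ} ∈ D satisfies A_j(z_θ) ≠ 0 for some j ∈ {0, …, k−1}. Then every analytic solution f on D of the equation (f^{(k)})^{n_0} + A_{k−1}(z)(f^{(k−1)})^{n_0} + ⋯ + A_1(z)(f')^{n_0} + A_0(z) f^{n_0} = 0 is bounded on D, i.e. f belongs to H^∞. -/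
open MeasureTheory Metric Set Finset

/-!
Raising the equation to the power `1 / n₀` and using the growth bound on the coefficients gives
`‖f⁽ᵏ⁾ z‖ ≤ C (1 - ‖z‖)^(-s/n₀) ∑_{j<k} ‖f⁽ʲ⁾ z‖`. Along the radius `τ ↦ τ z` the quantity
`w τ = ∑_{j<k} ‖f⁽ʲ⁾ (τ z)‖` therefore satisfies a linear integral inequality whose coefficient
`‖z‖ (1 + C (1 - τ ‖z‖)^(-s/n₀))` has integral at most `1 + C / (1 - s/n₀)` over `[0, 1]`,
uniformly in `z`, since `s / n₀ < 1`. Grönwall's inequality then bounds `‖f z‖ ≤ w 1` by a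
constant independent of `z`.
-/

theorem norm_le_of_cpow_add_sum_mul_cpow_eq_zero {ι : Type*} (s : Finset ι) {p K : ℝ}
    (hp : 0 < p) (hK : 0 ≤ K) {x : ℂ} {a y : ι → ℂ} (ha : ∀ i ∈ s, ‖a i‖ ≤ K)
    (h : x ^ (p : ℂ) + ∑ i ∈ s, a i * y i ^ (p : ℂ) = 0) :
    ‖x‖ ≤ (#s * K) ^ p⁻¹ * ∑ i ∈ s, ‖y i‖ := by
  set S := ∑ i ∈ s, ‖y i‖
  have hS : 0 ≤ S := sum_nonneg fun i _ => norm_nonneg _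
  have hx : ‖x‖ ^ p ≤ #s * K * S ^ p := calc
    ‖x‖ ^ p = ‖∑ i ∈ s, a i * y i ^ (p : ℂ)‖ := by
      rw [← Complex.norm_cpow_real, eq_neg_of_add_eq_zero_left h, norm_neg]
    _ ≤ ∑ i ∈ s, K * S ^ p := by
      refine norm_sum_le_of_le _ fun i hi => ?_
      rw [norm_mul, Complex.norm_cpow_real]
      exact mul_le_mul (ha i hi) (Real.rpow_le_rpow (norm_nonneg _)
        (single_le_sum (fun j _ => norm_nonneg (y j)) hi) hp.le) (by positivity) hK
    _ = #s * K * S ^ p := by rw [sum_const, nsmul_eq_mul, mul_assoc]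
  calc ‖x‖ = (‖x‖ ^ p) ^ p⁻¹ := (Real.rpow_rpow_inv (norm_nonneg _) hp.ne').symm
    _ ≤ (#s * K * S ^ p) ^ p⁻¹ := Real.rpow_le_rpow (by positivity) hx (by positivity)
    _ = (#s * K) ^ p⁻¹ * S := by
      rw [Real.mul_rpow (by positivity) (by positivity), Real.rpow_rpow_inv hS hp.ne']

theorem le_mul_one_sub_rpow_neg_of_one_sub_sq_rpow_mul_le {r s x M : ℝ} (hr0 : 0 ≤ r)
    (hr1 : r < 1) (hs : 0 ≤ s) (hx : 0 ≤ x) (h : (1 - r ^ 2) ^ s * x ≤ M) :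
    x ≤ M * (1 - r) ^ (-s) := by
  have hpos : 0 < (1 - r) ^ s := Real.rpow_pos_of_pos (by linarith) s
  rw [Real.rpow_neg (by linarith), ← div_eq_mul_inv, le_div_iff₀ hpos, mul_comm]
  refine le_trans (mul_le_mul_of_nonneg_right ?_ hx) h
  exact Real.rpow_le_rpow (by linarith) (by nlinarith) hs

theorem norm_le_of_cpow_add_sum_eq_zero_of_weighted_bound {k : ℕ} {p s M : ℝ} (hp : 0 < p)
    (hs : 0 ≤ s) (hM : 0 ≤ M) {z : ℂ} (hz : ‖z‖ < 1) {a y : ℕ → ℂ}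
    (ha : ∀ j < k, (1 - ‖z‖ ^ 2) ^ s * ‖a j‖ ≤ M)
    (h : y k ^ (p : ℂ) + ∑ j ∈ range k, a j * y j ^ (p : ℂ) = 0) :
    ‖y k‖ ≤ (k * M) ^ p⁻¹ * (1 - ‖z‖) ^ (-(s / p)) * ∑ j ∈ range k, ‖y j‖ := by
  have hz' : 0 < 1 - ‖z‖ := by linarith
  have hbound := norm_le_of_cpow_add_sum_mul_cpow_eq_zero (range k) hp
    (mul_nonneg hM (Real.rpow_nonneg hz'.le _)) (fun j hj =>
      le_mul_one_sub_rpow_neg_of_one_sub_sq_rpow_mul_le (norm_nonneg z) hz hs (norm_nonneg _)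
        (ha j (mem_range.1 hj))) h
  rwa [card_range, ← mul_assoc, Real.mul_rpow (by positivity) (Real.rpow_nonneg hz'.le _),
    ← Real.rpow_mul hz'.le, neg_mul, ← div_eq_mul_inv] at hbound

theorem le_mul_exp_integral_of_le_add_integral {w g : ℝ → ℝ} {a b c : ℝ} (hab : a ≤ b)
    (hw : ContinuousOn w (Icc a b)) (hg : ContinuousOn g (Icc a b))
    (hg0 : ∀ t ∈ Icc a b, 0 ≤ g t)
    (h : ∀ t ∈ Icc a b, w t ≤ c + ∫ τ in a..t, g τ * w τ) :
    ∀ t ∈ Icc a b, w t ≤ c * Real.exp (∫ τ in a..t, g τ) := by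
  set W : ℝ → ℝ := fun t => c + ∫ τ in a..t, g τ * w τ
  set G : ℝ → ℝ := fun t => ∫ τ in a..t, g τ
  have hgw : ContinuousOn (fun τ => g τ * w τ) (Icc a b) := hg.mul hw
  have hprim {φ : ℝ → ℝ} (hφ : ContinuousOn φ (Icc a b)) :
      ContinuousOn (fun t => ∫ τ in a..t, φ τ) (Icc a b) := by
    rw [← uIcc_of_le hab] at hφ ⊢
    exact intervalIntegral.continuousOn_primitive_interval (hφ.integrableOn_compact isCompact_uIcc)
  have hderiv {φ : ℝ → ℝ} (hφ : ContinuousOn φ (Icc a b)) {t : ℝ} (ht : t ∈ Ioo a b) :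
      HasDerivAt (fun t => ∫ τ in a..t, φ τ) (φ t) t :=
    intervalIntegral.integral_hasDerivAt_right
      ((hφ.mono (Icc_subset_Icc le_rfl ht.2.le)).intervalIntegrable_of_Icc ht.1.le)
      ((hφ.mono Ioo_subset_Icc_self).stronglyMeasurableAtFilter isOpen_Ioo t ht)
      (hφ.continuousAt (Icc_mem_nhds ht.1 ht.2))
  have hanti : AntitoneOn (fun t => W t * Real.exp (-G t)) (Icc a b) := by
    refine antitoneOn_of_hasDerivWithinAt_nonpos (convex_Icc a b)
      (f' := fun t => g t * w t * Real.exp (-G t) + W t * (Real.exp (-G t) * -g t))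
      (((hprim hgw).const_add c).mul (hprim hg).neg.rexp) (fun t ht => ?_) (fun t ht => ?_)
    all_goals rw [interior_Icc] at ht
    · exact (((hderiv hgw ht).const_add c).mul (hderiv hg ht).neg.exp).hasDerivWithinAt
    · have hwW : w t ≤ W t := h t (Ioo_subset_Icc_self ht)
      have := mul_le_mul_of_nonneg_left hwW (hg0 t (Ioo_subset_Icc_self ht))
      have := Real.exp_pos (-G t)
      nlinarith
  intro t ht
  have hΦ : W t * Real.exp (-G t) ≤ c := by
    simpa [W, G] using hanti (left_mem_Icc.2 hab) ht ht.1
  calc w t ≤ W t := h t ht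
    _ = W t * Real.exp (-G t) * Real.exp (G t) := by
      rw [mul_assoc, ← Real.exp_add, neg_add_cancel, Real.exp_zero, mul_one]
    _ ≤ c * Real.exp (G t) := mul_le_mul_of_nonneg_right hΦ (Real.exp_pos _).le

theorem one_sub_mul_pos_of_mem_Icc {τ r : ℝ} (hτ : τ ∈ Icc (0 : ℝ) 1) (hr : r < 1) :
    0 < 1 - τ * r := by
  rcases le_total 0 r with hr0 | hr0 <;> nlinarith [hτ.1, hτ.2]

theorem continuousOn_mul_one_add_mul_one_sub_mul_rpow {r C α : ℝ} (hr : r < 1) :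
    ContinuousOn (fun τ : ℝ => r * (1 + C * (1 - τ * r) ^ (-α))) (Icc 0 1) :=
  fun _ hτ => (continuousAt_const.mul (continuousAt_const.add (continuousAt_const.mul
    ((continuousAt_const.sub (continuousAt_id.mul continuousAt_const)).rpow_const
      (Or.inl (one_sub_mul_pos_of_mem_Icc hτ hr).ne'))))).continuousWithinAt

theorem integral_mul_one_add_mul_one_sub_mul_rpow_le {r C α : ℝ} (hr : r < 1) (hC : 0 ≤ C) (hα : α < 1) :
    ∫ τ in (0 : ℝ)..1, r * (1 + C * (1 - τ * r) ^ (-α)) ≤ 1 + C / (1 - α) := by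
  have hderiv : ∀ τ ∈ uIcc (0 : ℝ) 1, HasDerivAt
      (fun τ => r * τ - C * (1 - τ * r) ^ (1 - α) / (1 - α))
      (r * (1 + C * (1 - τ * r) ^ (-α))) τ := fun τ hτ => by
    rw [Set.uIcc_of_le zero_le_one] at hτ
    have hbase := one_sub_mul_pos_of_mem_Icc hτ hr
    have h1 : HasDerivAt (fun τ : ℝ => 1 - τ * r) (-r) τ := by
      simpa using ((hasDerivAt_id τ).mul_const r).const_sub 1
    have h2 := ((h1.rpow_const (p := 1 - α) (Or.inl hbase.ne')).const_mul C).div_const (1 - α)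
    refine (((hasDerivAt_id τ).const_mul r).sub h2).congr_deriv ?_
    rw [show 1 - α - 1 = -α by ring]
    field_simp [show (1 - α) ≠ 0 by linarith]
    ring
  rw [intervalIntegral.integral_eq_sub_of_hasDerivAt hderiv
    ((continuousOn_mul_one_add_mul_one_sub_mul_rpow hr).intervalIntegrable_of_Icc
      zero_le_one)]
  have : 0 ≤ C * (1 - 1 * r) ^ (1 - α) / (1 - α) :=
    div_nonneg (mul_nonneg hC (Real.rpow_nonneg (by linarith) _)) (by linarith)
  simp only [mul_zero, zero_mul, sub_zero, Real.one_rpow, mul_one] at this ⊢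
  linarith

theorem norm_smul_le_norm_zero_add_integral_norm_deriv {E : Type*} [NormedAddCommGroup E]
    [NormedSpace ℂ E] [CompleteSpace E] {F : ℂ → E} {U : Set ℂ} (hU : StarConvex ℝ 0 U)
    (hF : AnalyticOnNhd ℂ F U) {z : ℂ} (hz : z ∈ U) {t : ℝ} (ht : t ∈ Icc (0 : ℝ) 1) :
    ‖F (t • z)‖ ≤ ‖F 0‖ + ∫ τ in (0 : ℝ)..t, ‖z‖ * ‖deriv F (τ • z)‖ := by
  have hmem : ∀ τ ∈ Icc (0 : ℝ) t, τ • z ∈ U := fun τ hτ =>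
    hU.smul_mem hz hτ.1 (hτ.2.trans ht.2)
  have hpath : ∀ τ : ℝ, HasDerivAt (fun τ : ℝ => τ • z) z τ := fun τ => by
    simpa using (hasDerivAt_id τ).smul_const z
  have hray : Continuous fun τ : ℝ => τ • z := continuous_id.smul continuous_const
  have hcont : ContinuousOn (fun τ : ℝ => z • deriv F (τ • z)) (Icc 0 t) :=
    (hF.deriv.continuousOn.comp hray.continuousOn hmem).const_smul z
  have hftc := intervalIntegral.integral_eq_sub_of_hasDerivAt_of_le
    (f := fun τ : ℝ => F (τ • z)) ht.1 (hF.continuousOn.comp hray.continuousOn hmem)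
    (fun τ hτ => (hF _ (hmem τ (Ioo_subset_Icc_self hτ))).differentiableAt.hasDerivAt.scomp τ
      (hpath τ))
    (hcont.intervalIntegrable_of_Icc ht.1)
  rw [zero_smul] at hftc
  calc ‖F (t • z)‖ = ‖F 0 + ∫ τ in (0 : ℝ)..t, z • deriv F (τ • z)‖ := by
        rw [hftc, add_sub_cancel]
    _ ≤ ‖F 0‖ + ∫ τ in (0 : ℝ)..t, ‖z • deriv F (τ • z)‖ :=
        (norm_add_le _ _).trans (add_le_add_right
          (intervalIntegral.norm_integral_le_integral_norm ht.1) _)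
    _ = ‖F 0‖ + ∫ τ in (0 : ℝ)..t, ‖z‖ * ‖deriv F (τ • z)‖ := by simp only [norm_smul]

theorem DifferentiableOn.analyticOnNhd_iteratedDeriv {f : ℂ → ℂ} {U : Set ℂ}
    (hf : DifferentiableOn ℂ f U) (hU : IsOpen U) (j : ℕ) :
    AnalyticOnNhd ℂ (iteratedDeriv j f) U := by
  rw [iteratedDeriv_eq_iterate]
  exact (hf.analyticOnNhd hU).iterated_deriv j

theorem sum_range_succ_le_sum_range_add {a : ℕ → ℝ} (ha : 0 ≤ a 0) (k : ℕ) :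
    ∑ j ∈ range k, a (j + 1) ≤ ∑ j ∈ range k, a j + a k := by
  have := (sum_range_succ' a k).symm.trans (sum_range_succ a k)
  linarith

section RayEstimate

variable {f : ℂ → ℂ} {k : ℕ} {C α : ℝ} {z : ℂ}

theorem smul_mem_ball_of_mem_Icc (hz : z ∈ ball (0 : ℂ) 1) {τ : ℝ} (hτ : τ ∈ Icc (0 : ℝ) 1) :
    τ • z ∈ ball (0 : ℂ) 1 :=
  ((convex_ball (0 : ℂ) 1).starConvex (mem_ball_self one_pos)).smul_mem hz hτ.1 hτ.2

theorem continuousOn_norm_iteratedDeriv_smul (hf : DifferentiableOn ℂ f (ball 0 1))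
    (hz : z ∈ ball (0 : ℂ) 1) (j : ℕ) :
    ContinuousOn (fun τ : ℝ => ‖iteratedDeriv j f (τ • z)‖) (Icc 0 1) :=
  ((hf.analyticOnNhd_iteratedDeriv isOpen_ball j).continuousOn.comp
    (continuous_id.smul continuous_const).continuousOn
    fun _ hτ => smul_mem_ball_of_mem_Icc hz hτ).norm

theorem sum_norm_iteratedDeriv_smul_le_add_integral (hf : DifferentiableOn ℂ f (ball 0 1))
    (hbound : ∀ x ∈ ball (0 : ℂ) 1, ‖iteratedDeriv k f x‖ ≤
      C * (1 - ‖x‖) ^ (-α) * ∑ j ∈ range k, ‖iteratedDeriv j f x‖)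
    (hz : z ∈ ball (0 : ℂ) 1) {t : ℝ} (ht : t ∈ Icc (0 : ℝ) 1) :
    ∑ j ∈ range k, ‖iteratedDeriv j f (t • z)‖ ≤ ∑ j ∈ range k, ‖iteratedDeriv j f 0‖ +
      ∫ τ in (0 : ℝ)..t, ‖z‖ * (1 + C * (1 - τ * ‖z‖) ^ (-α)) *
        ∑ j ∈ range k, ‖iteratedDeriv j f (τ • z)‖ := by
  have hz1 : ‖z‖ < 1 := mem_ball_zero_iff.1 hz
  have hsub : Icc (0 : ℝ) t ⊆ Icc 0 1 := Icc_subset_Icc le_rfl ht.2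
  have hcont (j : ℕ) : ContinuousOn (fun τ : ℝ => ‖iteratedDeriv j f (τ • z)‖) (Icc 0 t) :=
    (continuousOn_norm_iteratedDeriv_smul hf hz j).mono hsub
  have hpointwise : ∀ τ ∈ Icc (0 : ℝ) t,
      ‖z‖ * ∑ j ∈ range k, ‖iteratedDeriv (j + 1) f (τ • z)‖ ≤
        ‖z‖ * (1 + C * (1 - τ * ‖z‖) ^ (-α)) * ∑ j ∈ range k, ‖iteratedDeriv j f (τ • z)‖ := by
    intro τ hτ
    have hτz : ‖τ • z‖ = τ * ‖z‖ := by
      rw [norm_smul, Real.norm_eq_abs, abs_of_nonneg hτ.1]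
    have hk := hbound _ (smul_mem_ball_of_mem_Icc hz (hsub hτ))
    rw [hτz] at hk
    have := sum_range_succ_le_sum_range_add (a := fun j => ‖iteratedDeriv j f (τ • z)‖)
      (norm_nonneg _) k
    rw [mul_assoc]
    gcongr
    linarith
  calc ∑ j ∈ range k, ‖iteratedDeriv j f (t • z)‖
      ≤ ∑ j ∈ range k, (‖iteratedDeriv j f 0‖ +
          ∫ τ in (0 : ℝ)..t, ‖z‖ * ‖iteratedDeriv (j + 1) f (τ • z)‖) := by
        refine sum_le_sum fun j _ => ?_
        rw [iteratedDeriv_succ]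
        exact norm_smul_le_norm_zero_add_integral_norm_deriv
          ((convex_ball (0 : ℂ) 1).starConvex (mem_ball_self one_pos))
          (hf.analyticOnNhd_iteratedDeriv isOpen_ball j) hz ht
    _ = ∑ j ∈ range k, ‖iteratedDeriv j f 0‖ +
          ∫ τ in (0 : ℝ)..t, ‖z‖ * ∑ j ∈ range k, ‖iteratedDeriv (j + 1) f (τ • z)‖ := by
        simp only [mul_sum]
        rw [sum_add_distrib, intervalIntegral.integral_finsetSum fun j _ =>
          ((hcont (j + 1)).intervalIntegrable_of_Icc ht.1).const_mul ‖z‖]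
    _ ≤ _ := by
        gcongr
        refine intervalIntegral.integral_mono_on ht.1 ?_ ?_ hpointwise
        · exact ((continuousOn_finsetSum _ fun j _ => hcont (j + 1)).intervalIntegrable_of_Icc
            ht.1).const_mul ‖z‖
        · exact (((continuousOn_mul_one_add_mul_one_sub_mul_rpow hz1).mono
            hsub).mul (continuousOn_finsetSum _ fun j _ => hcont j)).intervalIntegrable_of_Icc ht.1

theorem norm_le_of_norm_iteratedDeriv_le (hf : DifferentiableOn ℂ f (ball 0 1)) (hk : 0 < k)
    (hC : 0 ≤ C) (hα : α < 1)
    (hbound : ∀ x ∈ ball (0 : ℂ) 1, ‖iteratedDeriv k f x‖ ≤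
      C * (1 - ‖x‖) ^ (-α) * ∑ j ∈ range k, ‖iteratedDeriv j f x‖)
    (hz : z ∈ ball (0 : ℂ) 1) :
    ‖f z‖ ≤ (∑ j ∈ range k, ‖iteratedDeriv j f 0‖) * Real.exp (1 + C / (1 - α)) := by
  have hz1 : ‖z‖ < 1 := mem_ball_zero_iff.1 hz
  have hgronwall := le_mul_exp_integral_of_le_add_integral zero_le_one
    (continuousOn_finsetSum _ fun j _ => continuousOn_norm_iteratedDeriv_smul hf hz j)
    (continuousOn_mul_one_add_mul_one_sub_mul_rpow hz1)
    (fun τ hτ => mul_nonneg (norm_nonneg z) (add_nonneg zero_le_one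
      (mul_nonneg hC (Real.rpow_nonneg (one_sub_mul_pos_of_mem_Icc hτ hz1).le _))))
    (fun t ht => by
      simpa only [zero_smul] using sum_norm_iteratedDeriv_smul_le_add_integral hf hbound hz ht)
    1 (right_mem_Icc.2 zero_le_one)
  simp only [one_smul] at hgronwall
  calc ‖f z‖ ≤ ∑ j ∈ range k, ‖iteratedDeriv j f z‖ :=
        single_le_sum (f := fun j => ‖iteratedDeriv j f z‖) (fun j _ => norm_nonneg _)
          (mem_range.2 hk)
    _ ≤ _ := hgronwall
    _ ≤ _ := by
        gcongr
        exact integral_mul_one_add_mul_one_sub_mul_rpow_le hz1 hC hα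

end RayEstimate

theorem stmt5_general (k : ℕ) (hk : 1 ≤ k) (n0 s : ℝ) (hn0 : 1 < n0)
    (hs0 : 0 ≤ s) (hs1 : s < 1)
    (A : ℕ → ℂ → ℂ)
    (hAs : ∀ j < k, ∃ M : ℝ, ∀ z ∈ ball (0:ℂ) 1,
      (1 - ‖z‖ ^ 2) ^ s * ‖A j z‖ ≤ M) :
    ∀ f : ℂ → ℂ, DifferentiableOn ℂ f (ball (0:ℂ) 1) →
      (∀ z ∈ ball (0:ℂ) 1,
        (iteratedDeriv k f z) ^ ((n0 : ℝ) : ℂ) +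
          ∑ j ∈ Finset.range k, A j z * (iteratedDeriv j f z) ^ ((n0 : ℝ) : ℂ) = 0) →
      ∃ M : ℝ, ∀ z ∈ ball (0:ℂ) 1, ‖f z‖ ≤ M := by
  intro f hf hEq
  have hn0' : 0 < n0 := zero_lt_one.trans hn0
  choose! M hM using hAs
  set M' := ∑ j ∈ range k, |M j|
  have hM' : ∀ j < k, ∀ z ∈ ball (0:ℂ) 1, (1 - ‖z‖ ^ 2) ^ s * ‖A j z‖ ≤ M' := fun j hj z hz =>
    (hM j hj z hz).trans ((le_abs_self _).trans
      (single_le_sum (f := fun j => |M j|) (fun j _ => abs_nonneg _) (mem_range.2 hj)))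
  have hbound : ∀ z ∈ ball (0:ℂ) 1, ‖iteratedDeriv k f z‖ ≤
      (k * M') ^ n0⁻¹ * (1 - ‖z‖) ^ (-(s / n0)) * ∑ j ∈ range k, ‖iteratedDeriv j f z‖ :=
    fun z hz => norm_le_of_cpow_add_sum_eq_zero_of_weighted_bound
      (y := (iteratedDeriv · f z)) hn0' hs0 (sum_nonneg fun j _ => abs_nonneg _)
      (mem_ball_zero_iff.1 hz) (fun j hj => hM' j hj z hz) (hEq z hz)
  exact ⟨_, fun z hz => norm_le_of_norm_iteratedDeriv_le hf hk (by positivity)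
    ((div_lt_one hn0').2 (by linarith)) hbound hz⟩

theorem stmt5 (k : ℕ) (hk : 1 ≤ k) (n0 s : ℝ) (hn0 : 1 < n0)
    (hs0 : 0 ≤ s) (hs1 : s < 1)
    (A : ℕ → ℂ → ℂ) (hA : ∀ j < k, DifferentiableOn ℂ (A j) (ball (0:ℂ) 1))
    (hAs : ∀ j < k, ∃ M : ℝ, ∀ z ∈ ball (0:ℂ) 1,
      (1 - ‖z‖ ^ 2) ^ s * ‖A j z‖ ≤ M)
    (hzθ : ∃ θ ∈ Set.Ico (0:ℝ) (2 * Real.pi), ∃ ν ∈ Set.Ico (0:ℝ) 1, ∃ j < k,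
      A j ((ν : ℂ) * Complex.exp ((θ : ℂ) * Complex.I)) ≠ 0) :
    ∀ f : ℂ → ℂ, DifferentiableOn ℂ f (ball (0:ℂ) 1) →
      (∀ z ∈ ball (0:ℂ) 1,
        (iteratedDeriv k f z) ^ ((n0 : ℝ) : ℂ) +
          ∑ j ∈ Finset.range k, A j z * (iteratedDeriv j f z) ^ ((n0 : ℝ) : ℂ) = 0) →
      ∃ M : ℝ, ∀ z ∈ ball (0:ℂ) 1, ‖f z‖ ≤ M :=
  stmt5_general k hk n0 s hn0 hs0 hs1 A hAs
end

section
/- Let k ≥ 1 and let n_0 > 1 be real. Let A_0, …, A_{k−1} be analytic on the unit disk D and belong to the Bloch space B, i.e. sup_{z∈D} |A_j'(z)|(1−|z|²) < ∞ for every j = 0, …, k−1. Suppose there exist θ ∈ [0, 2π) and ν ∈ [0,1) such that z_θ = ν e^{iθ} ∈ D satisfies A_j(z_θ) ≠ 0 for some j ∈ {0, …, k−1}. Then every analytic solution f on D of the equation (f^{(k)})^{n_0} + A_{k−1}(z)(f^{(k−1)})^{n_0} + ⋯ + A_1(z)(f')^{n_0} + A_0(z) f^{n_0} = 0 belongs to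 the Bloch-type space B^s for every s ∈ (0, ∞), i.e. sup_{z∈D} |f'(z)|(1−|z|²)^s < ∞ for every s > 0. -/
/-!
Comparing `t ↦ A (t w)` with the barrier `(M / h) (1 - t |w|) ^ (-h)` shows that a Bloch
coefficient grows slower than every power `(1 - |w|) ^ (-h)`, `h > 0`. Along a radius `t ↦ t z`,
the jet `(f, f', …, f^(k-1))` satisfies a linear differential inequality whose coefficient
`1 + ∑ |A_j|`, bounded by a multiple of `1 + (1 - t) ^ (-1/2)`, is integrable on `[0, 1)`;
Grönwall bounds the jet on the whole disk. The equation then gives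
`|f'(z)| ≲ 1 + (1 - |z|) ^ (-s)`, which the weight `(1 - |z|²) ^ s` absorbs.
-/

open MeasureTheory Metric Set

open Filter Topology

theorem norm_le_mul_exp_of_norm_deriv_right_le_mul {E : Type*} [NormedAddCommGroup E]
    [NormedSpace ℝ E] {a b : ℝ} {g g' : ℝ → E} {φ φ' : ℝ → ℝ}
    (hg : ContinuousOn g (Icc a b)) (hg' : ∀ t ∈ Ico a b, HasDerivWithinAt g (g' t) (Ici t) t)
    (hφ : ContinuousOn φ (Icc a b)) (hφ' : ∀ t ∈ Ico a b, HasDerivWithinAt φ (φ' t) (Ici t) t)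
    (bound : ∀ t ∈ Ico a b, ‖g' t‖ ≤ φ' t * ‖g t‖) :
    ∀ t ∈ Icc a b, ‖g t‖ ≤ ‖g a‖ * Real.exp (φ t - φ a) := by
  intro t ht
  -- The slack `ε` makes the fencing inequality strict; it is removed by letting `ε → 0`.
  set barrier : ℝ → ℝ → ℝ := fun ε x => (‖g a‖ + ε) * Real.exp (φ x - φ a + ε * (x - a))
  have le_barrier : ∀ ε > 0, ‖g t‖ ≤ barrier ε t := by
    intro ε hε
    have hpos : ∀ x, 0 < barrier ε x := fun x => by positivity
    refine image_norm_le_of_norm_deriv_right_lt_deriv_boundary' hg hg'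
      (B' := fun x => barrier ε x * (φ' x + ε)) (by simp [barrier, hε.le]) ?_ ?_ ?_ ht
    · exact continuousOn_const.mul (((hφ.sub continuousOn_const).add
        (continuousOn_const.mul (continuousOn_id.sub continuousOn_const))).rexp)
    · intro x hx
      have := (((hφ' x hx).sub_const (φ a)).add
        (((hasDerivWithinAt_id x _).sub_const a).const_mul ε)).exp.const_mul (‖g a‖ + ε)
      refine this.congr_deriv ?_
      simp only [barrier, Pi.add_apply, id_eq]
      ring
    · intro x hx hgx
      calc ‖g' x‖ ≤ φ' x * barrier ε x := hgx ▸ bound x hx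
        _ < barrier ε x * (φ' x + ε) := by nlinarith [hpos x]
  have hlim : Tendsto (fun ε => barrier ε t) (𝓝[>] 0) (𝓝 (‖g a‖ * Real.exp (φ t - φ a))) := by
    refine (Continuous.tendsto' ?_ 0 _ (by simp [barrier])).mono_left nhdsWithin_le_nhds
    fun_prop
  exact ge_of_tendsto hlim (eventually_nhdsWithin_of_forall le_barrier)

lemma ofReal_mul_mem_ball {z : ℂ} (hz : z ∈ ball (0 : ℂ) 1) {t : ℝ} (ht : t ∈ Icc (0 : ℝ) 1) :
    (t : ℂ) * z ∈ ball (0 : ℂ) 1 := by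
  rw [mem_ball_zero_iff] at hz ⊢
  rw [norm_mul, Complex.norm_real, Real.norm_of_nonneg ht.1]
  nlinarith [norm_nonneg z, ht.2]

lemma HasDerivAt.comp_ofReal_mul {F : ℂ → ℂ} {F' z : ℂ} {t : ℝ}
    (hF : HasDerivAt F F' (t * z)) : HasDerivAt (fun s : ℝ => F (s * z)) (z * F') t := by
  rw [mul_comm]
  exact (hF.comp (t : ℂ) (hasDerivAt_mul_const z)).comp_ofReal

theorem norm_sub_le_of_bloch {A : ℂ → ℂ} {M h : ℝ} (hA : DifferentiableOn ℂ A (ball (0 : ℂ) 1))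
    (hB : ∀ z ∈ ball (0 : ℂ) 1, ‖deriv A z‖ * (1 - ‖z‖ ^ 2) ≤ M) (hh : 0 < h)
    {w : ℂ} (hw : w ∈ ball (0 : ℂ) 1) :
    ‖A w - A 0‖ ≤ M / h * (1 - ‖w‖) ^ (-h) := by
  have hM : 0 ≤ M := (norm_nonneg (deriv A 0)).trans (by simpa using hB 0 (mem_ball_self one_pos))
  set r := ‖w‖
  have hr0 : 0 ≤ r := norm_nonneg w
  have hr1 : r < 1 := mem_ball_zero_iff.1 hw
  have htr : ∀ t ∈ Icc (0 : ℝ) 1, 0 ≤ t * r ∧ t * r < 1 := fun t ht =>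
    ⟨mul_nonneg ht.1 hr0, by nlinarith [ht.2]⟩
  have hpos : ∀ t ∈ Icc (0 : ℝ) 1, 0 < 1 - t * r := fun t ht => by linarith [htr t ht]
  have hderiv : ∀ t ∈ Icc (0 : ℝ) 1,
      HasDerivAt (fun t : ℝ => A (t * w) - A 0) (w * deriv A (t * w)) t := fun t ht =>
    ((hA.differentiableAt (isOpen_ball.mem_nhds (ofReal_mul_mem_ball hw ht))).hasDerivAt
      |>.comp_ofReal_mul).sub_const _
  have hbarrier : ∀ t ∈ Icc (0 : ℝ) 1, HasDerivAt (fun t => M / h * (1 - t * r) ^ (-h))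
      (M * r * (1 - t * r) ^ (-h - 1)) t := fun t ht => by
    have := (((hasDerivAt_mul_const r).const_sub 1).rpow_const
      (p := -h) (Or.inl (hpos t ht).ne')).const_mul (M / h)
    refine this.congr_deriv ?_
    field_simp
  suffices bound : ∀ t ∈ Ico (0 : ℝ) 1, ‖w * deriv A (t * w)‖ ≤ M * r * (1 - t * r) ^ (-h - 1) by
    simpa using image_norm_le_of_norm_deriv_right_le_deriv_boundary'
      (fun t ht => (hderiv t ht).continuousAt.continuousWithinAt)
      (fun t ht => (hderiv t (Ico_subset_Icc_self ht)).hasDerivWithinAt)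
      (by simpa using div_nonneg hM hh.le)
      (fun t ht => (hbarrier t ht).continuousAt.continuousWithinAt)
      (fun t ht => (hbarrier t (Ico_subset_Icc_self ht)).hasDerivWithinAt) bound
      (right_mem_Icc.2 zero_le_one)
  intro t ht
  have ht' := Ico_subset_Icc_self ht
  have hnorm : ‖(t : ℂ) * w‖ = t * r := by
    rw [norm_mul, Complex.norm_real, Real.norm_of_nonneg ht.1]
  have hweight : 1 - t * r ≤ 1 - ‖(t : ℂ) * w‖ ^ 2 := by
    rw [hnorm]; nlinarith [htr t ht']
  have hderivA : ‖deriv A (t * w)‖ ≤ M * (1 - t * r) ^ (-h - 1) := calc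
    ‖deriv A (t * w)‖ ≤ M * (1 - t * r) ^ (-1 : ℝ) := by
      rw [Real.rpow_neg_one, ← div_eq_mul_inv, le_div_iff₀ (hpos t ht')]
      exact (mul_le_mul_of_nonneg_left hweight (norm_nonneg _)).trans
        (hB _ (ofReal_mul_mem_ball hw ht'))
    _ ≤ M * (1 - t * r) ^ (-h - 1) := mul_le_mul_of_nonneg_left
      (Real.rpow_le_rpow_of_exponent_ge (hpos t ht') (by linarith [htr t ht']) (by linarith)) hM
  calc ‖w * deriv A (t * w)‖ = r * ‖deriv A (t * w)‖ := norm_mul _ _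
    _ ≤ r * (M * (1 - t * r) ^ (-h - 1)) := mul_le_mul_of_nonneg_left hderivA hr0
    _ = M * r * (1 - t * r) ^ (-h - 1) := by ring

theorem exists_sum_norm_le_of_bloch {k : ℕ} {A : ℕ → ℂ → ℂ}
    (hA : ∀ j < k, DifferentiableOn ℂ (A j) (ball (0 : ℂ) 1))
    (hB : ∀ j < k, ∃ M : ℝ, ∀ z ∈ ball (0 : ℂ) 1, ‖deriv (A j) z‖ * (1 - ‖z‖ ^ 2) ≤ M) :
    ∃ C ≥ 0, ∀ h > 0, ∀ w ∈ ball (0 : ℂ) 1,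
      ∑ j ∈ Finset.range k, ‖A j w‖ ≤ C * (1 + (1 - ‖w‖) ^ (-h) / h) := by
  choose! M hM using hB
  refine ⟨∑ j ∈ Finset.range k, (‖A j 0‖ + |M j|), by positivity, fun h hh w hw => ?_⟩
  have hx : 0 ≤ (1 - ‖w‖) ^ (-h) / h :=
    div_nonneg (Real.rpow_nonneg (by linarith [mem_ball_zero_iff.1 hw]) _) hh.le
  rw [Finset.sum_mul]
  refine Finset.sum_le_sum fun j hj => ?_
  have hj := Finset.mem_range.1 hj
  calc ‖A j w‖ ≤ ‖A j 0‖ + ‖A j w - A j 0‖ := norm_le_norm_add_norm_sub' _ _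
    _ ≤ ‖A j 0‖ + M j / h * (1 - ‖w‖) ^ (-h) := by
      grw [norm_sub_le_of_bloch (hA j hj) (hM j hj) hh hw]
    _ ≤ (‖A j 0‖ + |M j|) * (1 + (1 - ‖w‖) ^ (-h) / h) := by
      rw [div_mul_eq_mul_div, mul_div_assoc]
      nlinarith [le_abs_self (M j), norm_nonneg (A j 0), abs_nonneg (M j)]

theorem norm_le_of_cpow_add_sum_eq_zero {p : ℝ} (hp : 1 ≤ p) {k : ℕ} {x : ℂ} {a y : ℕ → ℂ}
    (h : x ^ (p : ℂ) + ∑ j ∈ Finset.range k, a j * y j ^ (p : ℂ) = 0)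
    {N : ℝ} (hN : 0 ≤ N) (hy : ∀ j < k, ‖y j‖ ≤ N) :
    ‖x‖ ≤ (1 + ∑ j ∈ Finset.range k, ‖a j‖) * N := by
  set S := ∑ j ∈ Finset.range k, ‖a j‖
  have hS : 0 ≤ S := by positivity
  have hp0 : 0 < p := by linarith
  have hxp : ‖x‖ ^ p ≤ S * N ^ p := calc
    ‖x‖ ^ p = ‖∑ j ∈ Finset.range k, a j * y j ^ (p : ℂ)‖ := by
      rw [← Complex.norm_cpow_real, eq_neg_of_add_eq_zero_left h, norm_neg]
    _ ≤ ∑ j ∈ Finset.range k, ‖a j‖ * N ^ p := by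
      refine (norm_sum_le _ _).trans (Finset.sum_le_sum fun j hj => ?_)
      rw [norm_mul, Complex.norm_cpow_real]
      gcongr
      exact hy j (Finset.mem_range.1 hj)
    _ = S * N ^ p := (Finset.sum_mul ..).symm
  have hS_le : S ≤ (1 + S) ^ p := calc
    S ≤ (1 + S) ^ (1 : ℝ) := by simp
    _ ≤ (1 + S) ^ p := Real.rpow_le_rpow_of_exponent_le (by linarith) hp
  refine (Real.rpow_le_rpow_iff (norm_nonneg x) (by positivity) hp0).1 (hxp.trans ?_)
  rw [Real.mul_rpow (by linarith) hN]
  gcongr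

noncomputable def jet (k : ℕ) (f : ℂ → ℂ) (z : ℂ) : Fin k → ℂ := fun j => iteratedDeriv j f z

lemma norm_iteratedDeriv_le_norm_jet {k j : ℕ} (hj : j < k) (f : ℂ → ℂ) (z : ℂ) :
    ‖iteratedDeriv j f z‖ ≤ ‖jet k f z‖ :=
  norm_le_pi_norm (jet k f z) ⟨j, hj⟩

theorem norm_iteratedDeriv_le_of_cpow_add_sum_eq_zero {p : ℝ} (hp : 1 ≤ p) {k : ℕ}
    {A : ℕ → ℂ → ℂ} {f : ℂ → ℂ} {z : ℂ}
    (h : iteratedDeriv k f z ^ (p : ℂ) +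
      ∑ j ∈ Finset.range k, A j z * iteratedDeriv j f z ^ (p : ℂ) = 0) {j : ℕ} (hj : j ≤ k) :
    ‖iteratedDeriv j f z‖ ≤ (1 + ∑ i ∈ Finset.range k, ‖A i z‖) * ‖jet k f z‖ := by
  rcases hj.lt_or_eq with hj | rfl
  · exact (norm_iteratedDeriv_le_norm_jet hj f z).trans
      (le_mul_of_one_le_left (norm_nonneg _) (le_add_of_nonneg_right (by positivity)))
  · exact norm_le_of_cpow_add_sum_eq_zero hp h (norm_nonneg _)
      fun i hi => norm_iteratedDeriv_le_norm_jet hi f z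

lemma hasDerivAt_jet_ofReal_mul {k : ℕ} {f : ℂ → ℂ} (hf : DifferentiableOn ℂ f (ball (0 : ℂ) 1))
    {z : ℂ} (hz : z ∈ ball (0 : ℂ) 1) {t : ℝ} (ht : t ∈ Icc (0 : ℝ) 1) :
    HasDerivAt (fun t : ℝ => jet k f (t * z))
      (z • fun j : Fin k => iteratedDeriv (j + 1) f (t * z)) t := by
  have hfa := hf.analyticOnNhd isOpen_ball
  refine hasDerivAt_pi.2 fun j => HasDerivAt.comp_ofReal_mul ?_
  show HasDerivAt _ (iteratedDeriv (j + 1) f (t * z)) _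
  rw [iteratedDeriv_succ, iteratedDeriv_eq_iterate]
  exact (hfa.iterated_deriv j _ (ofReal_mul_mem_ball hz ht)).differentiableAt.hasDerivAt

theorem norm_jet_le_of_sum_norm_le {p : ℝ} (hp : 1 ≤ p) {k : ℕ} {A : ℕ → ℂ → ℂ} {f : ℂ → ℂ}
    (hf : DifferentiableOn ℂ f (ball (0 : ℂ) 1))
    (heq : ∀ z ∈ ball (0 : ℂ) 1, iteratedDeriv k f z ^ (p : ℂ) +
      ∑ j ∈ Finset.range k, A j z * iteratedDeriv j f z ^ (p : ℂ) = 0)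
    {C : ℝ} (hC : 0 ≤ C) (hsum : ∀ h > 0, ∀ w ∈ ball (0 : ℂ) 1,
      ∑ j ∈ Finset.range k, ‖A j w‖ ≤ C * (1 + (1 - ‖w‖) ^ (-h) / h))
    {z : ℂ} (hz : z ∈ ball (0 : ℂ) 1) :
    ‖jet k f z‖ ≤ ‖jet k f 0‖ * Real.exp (1 + 5 * C) := by
  have hderiv (t : ℝ) (ht : t ∈ Icc (0 : ℝ) 1) := hasDerivAt_jet_ofReal_mul (k := k) hf hz ht
  set φ : ℝ → ℝ := fun t => (1 + C) * t - 4 * C * (1 - t) ^ (1 / 2 : ℝ)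
  set φ' : ℝ → ℝ := fun t => 1 + C * (1 + (1 - t) ^ (-(1 / 2) : ℝ) / (1 / 2))
  have hφ : ContinuousOn φ (Icc 0 1) := by
    refine (continuousOn_const.mul continuousOn_id).sub (continuousOn_const.mul ?_)
    exact (continuousOn_const.sub continuousOn_id).rpow_const fun _ _ => Or.inr (by norm_num)
  have hφ' : ∀ t ∈ Ico (0 : ℝ) 1, HasDerivAt φ (φ' t) t := fun t ht => by
    have := ((hasDerivAt_id t).const_mul (1 + C)).sub ((((hasDerivAt_id t).const_sub 1).rpow_const
      (p := 1 / 2) (Or.inl (by simp only [id]; linarith [ht.2]))).const_mul (4 * C))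
    refine this.congr_deriv ?_
    simp only [φ', id]
    norm_num
    ring
  have hbound : ∀ t ∈ Ico (0 : ℝ) 1, ‖z • fun j : Fin k => iteratedDeriv (j + 1) f (t * z)‖ ≤
      φ' t * ‖jet k f (t * z)‖ := fun t ht => by
    have ht' := Ico_subset_Icc_self ht
    have hz1 : ‖z‖ ≤ 1 := (mem_ball_zero_iff.1 hz).le
    have htz : ‖(t : ℂ) * z‖ ≤ t := by
      rw [norm_mul, Complex.norm_real, Real.norm_of_nonneg ht.1]
      exact mul_le_of_le_one_right ht.1 hz1
    have hcoef : 1 + ∑ i ∈ Finset.range k, ‖A i (t * z)‖ ≤ φ' t := by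
      refine add_le_add le_rfl
        ((hsum (1 / 2) (by norm_num) _ (ofReal_mul_mem_ball hz ht')).trans ?_)
      have hweight : (1 - ‖(t : ℂ) * z‖) ^ (-(1 / 2) : ℝ) ≤ (1 - t) ^ (-(1 / 2) : ℝ) :=
        Real.rpow_le_rpow_of_nonpos (by linarith [ht.2]) (by linarith) (by norm_num)
      exact mul_le_mul_of_nonneg_left (by gcongr) hC
    rw [norm_smul]
    refine (mul_le_of_le_one_left (norm_nonneg _) hz1).trans ?_
    refine (pi_norm_le_iff_of_nonneg
      (mul_nonneg ((by positivity : (0 : ℝ) ≤ 1 + _).trans hcoef) (norm_nonneg _))).2 fun j => ?_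
    exact (norm_iteratedDeriv_le_of_cpow_add_sum_eq_zero hp (heq _ (ofReal_mul_mem_ball hz ht'))
      j.isLt).trans (mul_le_mul_of_nonneg_right hcoef (norm_nonneg _))
  have key := norm_le_mul_exp_of_norm_deriv_right_le_mul
    (fun t ht => (hderiv t ht).continuousAt.continuousWithinAt)
    (fun t ht => (hderiv t (Ico_subset_Icc_self ht)).hasDerivWithinAt) hφ
    (fun t ht => (hφ' t ht).hasDerivWithinAt) hbound 1 (right_mem_Icc.2 zero_le_one)
  norm_num [φ] at key
  convert key using 3
  ring

lemma one_sub_rpow_neg_mul_one_sub_sq_rpow_le {r s : ℝ} (hr0 : 0 ≤ r) (hr1 : r < 1) (hs : 0 ≤ s) :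
    (1 - r) ^ (-s) * (1 - r ^ 2) ^ s ≤ 2 ^ s := calc
  (1 - r) ^ (-s) * (1 - r ^ 2) ^ s = (1 + r) ^ s := by
    rw [show 1 - r ^ 2 = (1 - r) * (1 + r) by ring, Real.mul_rpow (by linarith) (by linarith),
      ← mul_assoc, Real.rpow_neg (by linarith), inv_mul_cancel₀ (by positivity), one_mul]
  _ ≤ 2 ^ s := by gcongr; linarith

theorem stmt6_general (k : ℕ) (hk : 1 ≤ k) (n0 : ℝ) (hn0 : 1 < n0)
    (A : ℕ → ℂ → ℂ) (hA : ∀ j < k, DifferentiableOn ℂ (A j) (ball (0:ℂ) 1))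
    (hABloch : ∀ j < k, ∃ M : ℝ, ∀ z ∈ ball (0:ℂ) 1,
      ‖deriv (A j) z‖ * (1 - ‖z‖ ^ 2) ≤ M) :
    ∀ f : ℂ → ℂ, DifferentiableOn ℂ f (ball (0:ℂ) 1) →
      (∀ z ∈ ball (0:ℂ) 1,
        (iteratedDeriv k f z) ^ ((n0 : ℝ) : ℂ) +
          ∑ j ∈ Finset.range k, A j z * (iteratedDeriv j f z) ^ ((n0 : ℝ) : ℂ) = 0) →
      ∀ s : ℝ, 0 < s →
        ∃ M : ℝ, ∀ z ∈ ball (0:ℂ) 1,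
          ‖deriv f z‖ * (1 - ‖z‖ ^ 2) ^ s ≤ M := by
  intro f hf heq s hs
  obtain ⟨C, hC, hsum⟩ := exists_sum_norm_le_of_bloch hA hABloch
  set B := ‖jet k f 0‖ * Real.exp (1 + 5 * C)
  refine ⟨(1 + C + C / s * 2 ^ s) * B, fun z hz => ?_⟩
  have hr : ‖z‖ < 1 := mem_ball_zero_iff.1 hz
  have hderiv : ‖deriv f z‖ ≤ (1 + C * (1 + (1 - ‖z‖) ^ (-s) / s)) * B := calc
    ‖deriv f z‖ = ‖iteratedDeriv 1 f z‖ := by rw [iteratedDeriv_one]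
    _ ≤ (1 + ∑ j ∈ Finset.range k, ‖A j z‖) * ‖jet k f z‖ :=
      norm_iteratedDeriv_le_of_cpow_add_sum_eq_zero hn0.le (heq z hz) hk
    _ ≤ (1 + C * (1 + (1 - ‖z‖) ^ (-s) / s)) * B :=
      mul_le_mul (add_le_add le_rfl (hsum s hs z hz))
        (norm_jet_le_of_sum_norm_le hn0.le hf heq hC hsum hz) (norm_nonneg _)
        ((by positivity : (0 : ℝ) ≤ 1 + _).trans (add_le_add le_rfl (hsum s hs z hz)))
  have hweight : (1 - ‖z‖ ^ 2) ^ s ≤ 1 :=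
    Real.rpow_le_one (by nlinarith [norm_nonneg z]) (by nlinarith [norm_nonneg z]) hs.le
  calc ‖deriv f z‖ * (1 - ‖z‖ ^ 2) ^ s
      ≤ (1 + C * (1 + (1 - ‖z‖) ^ (-s) / s)) * B * (1 - ‖z‖ ^ 2) ^ s :=
        mul_le_mul_of_nonneg_right hderiv (Real.rpow_nonneg (by nlinarith [norm_nonneg z]) _)
    _ = ((1 + C) * (1 - ‖z‖ ^ 2) ^ s + C / s * ((1 - ‖z‖) ^ (-s) * (1 - ‖z‖ ^ 2) ^ s)) * B := by
        ring
    _ ≤ ((1 + C) * 1 + C / s * 2 ^ s) * B := by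
        gcongr
        exact one_sub_rpow_neg_mul_one_sub_sq_rpow_le (norm_nonneg z) hr hs.le
    _ = (1 + C + C / s * 2 ^ s) * B := by ring

theorem stmt6 (k : ℕ) (hk : 1 ≤ k) (n0 : ℝ) (hn0 : 1 < n0)
    (A : ℕ → ℂ → ℂ) (hA : ∀ j < k, DifferentiableOn ℂ (A j) (ball (0:ℂ) 1))
    (hABloch : ∀ j < k, ∃ M : ℝ, ∀ z ∈ ball (0:ℂ) 1,
      ‖deriv (A j) z‖ * (1 - ‖z‖ ^ 2) ≤ M)
    (hzθ : ∃ θ ∈ Set.Ico (0:ℝ) (2 * Real.pi), ∃ ν ∈ Set.Ico (0:ℝ) 1, ∃ j < k,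
      A j ((ν : ℂ) * Complex.exp ((θ : ℂ) * Complex.I)) ≠ 0) :
    ∀ f : ℂ → ℂ, DifferentiableOn ℂ f (ball (0:ℂ) 1) →
      (∀ z ∈ ball (0:ℂ) 1,
        (iteratedDeriv k f z) ^ ((n0 : ℝ) : ℂ) +
          ∑ j ∈ Finset.range k, A j z * (iteratedDeriv j f z) ^ ((n0 : ℝ) : ℂ) = 0) →
      ∀ s : ℝ, 0 < s →
        ∃ M : ℝ, ∀ z ∈ ball (0:ℂ) 1,
          ‖deriv f z‖ * (1 - ‖z‖ ^ 2) ^ s ≤ M :=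
  stmt6_general k hk n0 hn0 A hA hABloch
end

section
/- Let k ≥ 1 and 1 ≤ j ≤ k. Let v : [0,1) → ℂ be k times continuously differentiable. Then for all x ∈ [0,1): |v^{(k−j)}(x)|² ≤ 2^j Σ_{m=1}^j |v^{(k−m)}(0)|² x^{j−m}/(j−m)! + 2^j ∫_0^x ( (x−s)^{j−1}/(j−1)! ) |v^{(k)}(s)|² ds. -/
/-!
Taylor's formula with integral remainder for `f = v^(k-j)` at `0`, to order `j - 1`, writes `f x`
as the `j` terms `f^(i)(0) x^i / i!` plus `∫₀ˣ w(s) v^(k)(s) ds`, where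
`w(s) = (x-s)^(j-1)/(j-1)!`. Squaring,
`(a₁ + ⋯ + a_j + r)² ≤ 2j (a₁² + ⋯ + a_j²) + 2r² ≤ 2^j (a₁² + ⋯ + a_j² + r²)`.
Since `0 ≤ x < 1`, each `u = x^i / i!` lies in `[0, 1]`, so `(u c)² ≤ u c²`; likewise
`0 ≤ w ≤ 1`, and Cauchy–Schwarz for the weight `w` gives `(∫ w h)² ≤ (∫ w) ∫ w h² ≤ ∫ w h²`.
-/

open MeasureTheory Set Topology
open scoped Nat

section IteratedDeriv

variable {𝕜 F : Type*} [NontriviallyNormedField 𝕜] [NormedAddCommGroup F] [NormedSpace 𝕜 F]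
  {f : 𝕜 → F} {s : Set 𝕜}

theorem iteratedDerivWithin_iteratedDerivWithin (m i : ℕ) :
    iteratedDerivWithin m (iteratedDerivWithin i f s) s = iteratedDerivWithin (m + i) f s := by
  have hi : iteratedDerivWithin i f s = (fun g => derivWithin g s)^[i] f :=
    funext fun _ => iteratedDerivWithin_eq_iterate
  ext x
  rw [iteratedDerivWithin_eq_iterate, hi, iteratedDerivWithin_eq_iterate,
    Function.iterate_add_apply]

theorem ContDiffOn.iteratedDerivWithin_right {m i : ℕ} (hf : ContDiffOn 𝕜 (m + i : ℕ) f s)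
    (hs : UniqueDiffOn 𝕜 s) : ContDiffOn 𝕜 m (iteratedDerivWithin i f s) s := by
  rw [contDiffOn_nat_iff_continuousOn_differentiableOn_deriv hs]
  simp only [iteratedDerivWithin_iteratedDerivWithin]
  exact ⟨fun l hl => hf.continuousOn_iteratedDerivWithin (by norm_cast; omega) hs,
    fun l hl => hf.differentiableOn_iteratedDerivWithin (by norm_cast; omega) hs⟩

end IteratedDeriv

theorem sq_integral_mul_le_integral_mul_integral_mul_sq {α : Type*} [MeasurableSpace α]
    {μ : Measure α} {w h : α → ℝ} (hw : 0 ≤ᵐ[μ] w) (hw_int : Integrable w μ)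
    (hwh_int : Integrable (fun x => w x * h x) μ)
    (hwh2_int : Integrable (fun x => w x * h x ^ 2) μ) :
    (∫ x, w x * h x ∂μ) ^ 2 ≤ (∫ x, w x ∂μ) * ∫ x, w x * h x ^ 2 ∂μ := by
  -- `c ↦ ∫ w (h - c)²` is a nonnegative quadratic polynomial, so its discriminant is `≤ 0`.
  have hquad : ∀ c : ℝ, 0 ≤ (∫ x, w x ∂μ) * (c * c) + (-2 * ∫ x, w x * h x ∂μ) * c +
      ∫ x, w x * h x ^ 2 ∂μ := by
    intro c
    have hexpand : (∫ x, w x ∂μ) * (c * c) + (-2 * ∫ x, w x * h x ∂μ) * c +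
        ∫ x, w x * h x ^ 2 ∂μ = ∫ x, w x * (h x - c) ^ 2 ∂μ := by
      have hsplit : (fun x => w x * (h x - c) ^ 2) =
          fun x => (c * c) * w x + (-2 * c) * (w x * h x) + w x * h x ^ 2 := by
        funext x; ring
      rw [hsplit, integral_add (f := fun x => c * c * w x + -2 * c * (w x * h x))
        ((hw_int.const_mul _).add (hwh_int.const_mul _)) hwh2_int,
        integral_add (hw_int.const_mul _) (hwh_int.const_mul _), integral_const_mul,
        integral_const_mul]
      ring
    rw [hexpand]
    exact integral_nonneg_of_ae (hw.mono fun x hx => mul_nonneg hx (sq_nonneg _))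
  have := discrim_le_zero hquad
  rw [discrim] at this
  linarith

theorem sq_sum_add_le_two_pow (n : ℕ) (α : ℕ → ℝ) (β : ℝ) :
    (∑ i ∈ Finset.range (n + 1), α i + β) ^ 2 ≤
      2 ^ (n + 1) * (∑ i ∈ Finset.range (n + 1), α i ^ 2 + β ^ 2) := by
  have hsum := sq_sum_le_card_mul_sum_sq (s := Finset.range (n + 1)) (f := α)
  rw [Finset.card_range, Nat.cast_add_one] at hsum
  have hcard : (2 * (n + 1) : ℝ) ≤ 2 ^ (n + 1) := by
    rw [pow_succ']
    exact_mod_cast Nat.mul_le_mul_left 2 (Nat.lt_two_pow_self (n := n))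
  have htwo : (2 : ℝ) ≤ 2 ^ (n + 1) := le_self_pow₀ one_le_two (by omega)
  have hsq_nonneg : 0 ≤ ∑ i ∈ Finset.range (n + 1), α i ^ 2 :=
    Finset.sum_nonneg fun i _ => sq_nonneg _
  nlinarith [sq_nonneg (∑ i ∈ Finset.range (n + 1), α i - β),
    mul_le_mul_of_nonneg_right hcard hsq_nonneg, mul_le_mul_of_nonneg_right htwo (sq_nonneg β)]

theorem pow_div_factorial_le_one {y : ℝ} (hy₀ : 0 ≤ y) (hy₁ : y ≤ 1) (i : ℕ) :
    y ^ i / i ! ≤ 1 :=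
  div_le_one_of_le₀ ((pow_le_one₀ hy₀ hy₁).trans (Nat.one_le_cast.2 (Nat.factorial_pos i)))
    (Nat.cast_nonneg _)

section Taylor

variable {E : Type*} [NormedAddCommGroup E] [NormedSpace ℝ E] [CompleteSpace E]
  {f : ℝ → E} {s : Set ℝ} {a b : ℝ} {n : ℕ}

theorem taylor_integral_remainder_of_subset (hs : UniqueDiffOn ℝ s) (hab : a ≤ b)
    (hsub : Icc a b ⊆ s) (hf : ContDiffOn ℝ (n + 1 : ℕ) f s) :
    f b - taylorWithinEval f n s a b =
      ∫ t in a..b, ((b - t) ^ n / n !) • iteratedDerivWithin (n + 1) f s t := by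
  have hderiv : ∀ t ∈ Ioo a b, HasDerivAt (fun y => taylorWithinEval f n s y b)
      (((b - t) ^ n / n !) • iteratedDerivWithin (n + 1) f s t) t := by
    intro t ht
    have hIoo : Ioo a b ∈ 𝓝 t := isOpen_Ioo.mem_nhds ht
    rw [div_eq_inv_mul]
    exact (hasDerivWithinAt_taylorWithinEval hs (mem_nhdsWithin_of_mem_nhds hIoo) ht
      (Ioo_subset_Icc_self.trans hsub) hf.of_succ
      (hf.differentiableOn_iteratedDerivWithin (by norm_cast; omega) hs t
        (hsub (Ioo_subset_Icc_self ht)))).hasDerivAt hIoo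
  have hint : IntervalIntegrable
      (fun t => ((b - t) ^ n / n !) • iteratedDerivWithin (n + 1) f s t) volume a b := by
    refine ContinuousOn.intervalIntegrable ?_
    rw [uIcc_of_le hab]
    exact (by fun_prop : Continuous fun t : ℝ => (b - t) ^ n / n !).continuousOn.smul
      ((hf.continuousOn_iteratedDerivWithin le_rfl hs).mono hsub)
  rw [intervalIntegral.integral_eq_sub_of_hasDerivAt_of_le hab
    ((continuousOn_taylorWithinEval hs hf.of_succ).mono hsub) hderiv hint,
    taylorWithinEval_self]

theorem norm_le_sum_add_integral_of_taylor (hs : UniqueDiffOn ℝ s) (hab : a ≤ b)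
    (hsub : Icc a b ⊆ s) (hf : ContDiffOn ℝ (n + 1 : ℕ) f s) :
    ‖f b‖ ≤ ∑ i ∈ Finset.range (n + 1), (b - a) ^ i / i ! * ‖iteratedDerivWithin i f s a‖ +
      ∫ t in a..b, (b - t) ^ n / n ! * ‖iteratedDerivWithin (n + 1) f s t‖ := by
  rw [← sub_add_cancel (f b) (taylorWithinEval f n s a b),
    taylor_integral_remainder_of_subset hs hab hsub hf, taylor_within_apply, add_comm]
  refine (norm_add_le _ _).trans (add_le_add ?_ ?_)
  · refine (norm_sum_le _ _).trans (le_of_eq (Finset.sum_congr rfl fun i _ => ?_))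
    rw [norm_smul, Real.norm_of_nonneg (by have := sub_nonneg.2 hab; positivity), div_eq_inv_mul]
  · refine (intervalIntegral.norm_integral_le_integral_norm hab).trans
      (le_of_eq (intervalIntegral.integral_congr fun t ht => ?_))
    rw [uIcc_of_le hab] at ht
    rw [norm_smul, Real.norm_of_nonneg (by have := sub_nonneg.2 ht.2; positivity)]

theorem sq_integral_taylor_remainder_le {H : ℝ → ℝ} (hab : a ≤ b) (hba : b - a ≤ 1)
    (hH : ContinuousOn H (Icc a b)) :
    (∫ t in a..b, (b - t) ^ n / n ! * H t) ^ 2 ≤ ∫ t in a..b, (b - t) ^ n / n ! * H t ^ 2 := by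
  set w : ℝ → ℝ := fun t => (b - t) ^ n / (n ! : ℝ)
  have hw : ContinuousOn w (Icc a b) := (by fun_prop : Continuous w).continuousOn
  have hw_mem : ∀ t ∈ Icc a b, 0 ≤ w t ∧ w t ≤ 1 := fun t ht =>
    ⟨by have := sub_nonneg.2 ht.2; positivity,
      pow_div_factorial_le_one (sub_nonneg.2 ht.2) (by linarith [ht.1]) n⟩
  have hint {g : ℝ → ℝ} (hg : ContinuousOn g (Icc a b)) :
      Integrable g (volume.restrict (Ioc a b)) :=
    (hg.integrableOn_Icc).mono_set Ioc_subset_Icc_self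
  have hw_int_le : ∫ t in a..b, w t ≤ 1 := by
    calc ∫ t in a..b, w t ≤ ∫ _ in a..b, (1 : ℝ) :=
          intervalIntegral.integral_mono_on hab (hw.intervalIntegrable_of_Icc hab)
            intervalIntegrable_const fun t ht => (hw_mem t ht).2
      _ ≤ 1 := by simpa using hba
  have hcs := sq_integral_mul_le_integral_mul_integral_mul_sq (μ := volume.restrict (Ioc a b))
    ((ae_restrict_iff' measurableSet_Ioc).2 (ae_of_all _ fun t ht =>
      (hw_mem t (Ioc_subset_Icc_self ht)).1))
    (hint hw) (hint (hw.mul hH)) (hint (hw.mul (hH.pow 2)))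
  simp only [← intervalIntegral.integral_of_le hab] at hcs
  have hnonneg : 0 ≤ ∫ t in a..b, w t * H t ^ 2 :=
    intervalIntegral.integral_nonneg hab fun t ht => mul_nonneg (hw_mem t ht).1 (sq_nonneg _)
  exact hcs.trans (mul_le_of_le_one_left hnonneg hw_int_le)

theorem sq_norm_le_two_pow_mul_of_taylor (hs : UniqueDiffOn ℝ s) (hab : a ≤ b)
    (hba : b - a ≤ 1) (hsub : Icc a b ⊆ s) (hf : ContDiffOn ℝ (n + 1 : ℕ) f s) :
    ‖f b‖ ^ 2 ≤
      2 ^ (n + 1) * ∑ i ∈ Finset.range (n + 1),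
          ‖iteratedDerivWithin i f s a‖ ^ 2 * ((b - a) ^ i / i !) +
        2 ^ (n + 1) * ∫ t in a..b, (b - t) ^ n / n ! * ‖iteratedDerivWithin (n + 1) f s t‖ ^ 2 := by
  have hcoeff : ∀ i : ℕ, ((b - a) ^ i / i ! * ‖iteratedDerivWithin i f s a‖) ^ 2 ≤
      ‖iteratedDerivWithin i f s a‖ ^ 2 * ((b - a) ^ i / i !) := by
    intro i
    set u := (b - a) ^ i / (i ! : ℝ)
    set c := ‖iteratedDerivWithin i f s a‖
    calc (u * c) ^ 2 = u * (c ^ 2 * u) := by ring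
      _ ≤ c ^ 2 * u := mul_le_of_le_one_left (by have := sub_nonneg.2 hab; positivity)
          (pow_div_factorial_le_one (sub_nonneg.2 hab) hba i)
  have hremainder := sq_integral_taylor_remainder_le (n := n) hab hba
    ((hf.continuousOn_iteratedDerivWithin le_rfl hs).mono hsub).norm
  calc ‖f b‖ ^ 2
      ≤ (∑ i ∈ Finset.range (n + 1), (b - a) ^ i / i ! * ‖iteratedDerivWithin i f s a‖ +
          ∫ t in a..b, (b - t) ^ n / n ! * ‖iteratedDerivWithin (n + 1) f s t‖) ^ 2 :=
        pow_le_pow_left₀ (norm_nonneg _) (norm_le_sum_add_integral_of_taylor hs hab hsub hf) 2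
    _ ≤ 2 ^ (n + 1) * (∑ i ∈ Finset.range (n + 1),
          ((b - a) ^ i / i ! * ‖iteratedDerivWithin i f s a‖) ^ 2 +
          (∫ t in a..b, (b - t) ^ n / n ! * ‖iteratedDerivWithin (n + 1) f s t‖) ^ 2) :=
        sq_sum_add_le_two_pow _ _ _
    _ ≤ _ := by
        rw [mul_add]
        gcongr with i
        exact hcoeff i

end Taylor

theorem stmt9_general (k j : ℕ) (hj1 : 1 ≤ j) (hjk : j ≤ k)
    (v : ℝ → ℂ) (hv : ContDiffOn ℝ k v (Set.Ico (0:ℝ) 1)) :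
    ∀ x ∈ Set.Ico (0:ℝ) 1,
      ‖iteratedDerivWithin (k - j) v (Set.Ico (0:ℝ) 1) x‖ ^ 2 ≤
        (2:ℝ) ^ j * (∑ m ∈ Finset.Icc 1 j,
          ‖iteratedDerivWithin (k - m) v (Set.Ico (0:ℝ) 1) 0‖ ^ 2 *
            (x ^ (j - m) / ((j - m).factorial : ℝ))) +
        (2:ℝ) ^ j * ∫ s in (0:ℝ)..x,
          ((x - s) ^ (j - 1) / ((j - 1).factorial : ℝ)) *
            ‖iteratedDerivWithin k v (Set.Ico (0:ℝ) 1) s‖ ^ 2 := by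
  rintro x ⟨hx₀, hx₁⟩
  obtain ⟨n, rfl⟩ : ∃ n, j = n + 1 := ⟨j - 1, by omega⟩
  have hS : UniqueDiffOn ℝ (Ico (0:ℝ) 1) := uniqueDiffOn_Ico 0 1
  have hkj : n + 1 + (k - (n + 1)) = k := by omega
  have hf : ContDiffOn ℝ (n + 1 : ℕ) (iteratedDerivWithin (k - (n + 1)) v (Ico 0 1)) (Ico 0 1) :=
    ContDiffOn.iteratedDerivWithin_right (by rwa [hkj]) hS
  have key := sq_norm_le_two_pow_mul_of_taylor hS hx₀ (by linarith) (Icc_subset_Ico_right hx₁) hf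
  simp only [iteratedDerivWithin_iteratedDerivWithin, hkj, sub_zero] at key
  rw [Nat.add_sub_cancel]
  convert key using 3
  refine Finset.sum_nbij' (fun m => n + 1 - m) (fun i => n + 1 - i) ?_ ?_ ?_ ?_ ?_ <;>
    intro i hi <;> simp only [Finset.mem_Icc, Finset.mem_range] at hi ⊢
  · omega
  · omega
  · omega
  · omega
  · rw [show k - i = n + 1 - i + (k - (n + 1)) by omega]

theorem stmt9 (k j : ℕ) (hk : 1 ≤ k) (hj1 : 1 ≤ j) (hjk : j ≤ k)
    (v : ℝ → ℂ) (hv : ContDiffOn ℝ k v (Set.Ico (0:ℝ) 1)) :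
    ∀ x ∈ Set.Ico (0:ℝ) 1,
      ‖iteratedDerivWithin (k - j) v (Set.Ico (0:ℝ) 1) x‖ ^ 2 ≤
        (2:ℝ) ^ j * (∑ m ∈ Finset.Icc 1 j,
          ‖iteratedDerivWithin (k - m) v (Set.Ico (0:ℝ) 1) 0‖ ^ 2 *
            (x ^ (j - m) / ((j - m).factorial : ℝ))) +
        (2:ℝ) ^ j * ∫ s in (0:ℝ)..x,
          ((x - s) ^ (j - 1) / ((j - 1).factorial : ℝ)) *
            ‖iteratedDerivWithin k v (Set.Ico (0:ℝ) 1) s‖ ^ 2 :=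
  stmt9_general k j hj1 hjk v hv
end

section
/- Let k ≥ 1, let x_0 ∈ (0,1), and let B_0, …, B_{k−1} : [0,1) → [0,∞) be nonnegative functions that are bounded on [0, x_0]. Define R(x,s) = Σ_{j=1}^k (x−s)^{j−1} B_{k−j}(x)/(j−1)! for 0 ≤ s ≤ x ≤ x_0. Suppose w : [0, x_0] → ℝ is a bounded measurable function satisfying w(x) ≤ ∫_0^x R(x,s) w(s) ds for all x ∈ [0, x_0]. Then w(x) ≤ 0 for all x ∈ [0, x_0]. -/
/-!
Iterating the integral inequality: if `w ≤ M` and `0 ≤ R ≤ C`, then by induction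
`w x ≤ M (C x)^m / m!` for every `m`, and the right-hand side tends to `0`.
The kernel of the theorem is nonnegative and bounded because each `B_j` is, and
`(x - s)^(j-1) / (j-1)! ≤ 1` for `0 ≤ x - s ≤ 1`.
-/

open MeasureTheory Set Filter Nat

section VolterraIteration

variable {R : ℝ → ℝ → ℝ} {w : ℝ → ℝ} {b C M : ℝ}

theorem le_mul_pow_div_factorial_of_le_integral_mul (hC : 0 ≤ C) (hM : 0 ≤ M)
    (hR0 : ∀ x ∈ Icc 0 b, ∀ s ∈ Icc 0 x, 0 ≤ R x s)
    (hRC : ∀ x ∈ Icc 0 b, ∀ s ∈ Icc 0 x, R x s ≤ C)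
    (hwM : ∀ x ∈ Icc 0 b, w x ≤ M)
    (hint : ∀ x ∈ Icc 0 b, IntervalIntegrable (fun s => R x s * w s) volume 0 x)
    (hw : ∀ x ∈ Icc 0 b, w x ≤ ∫ s in 0..x, R x s * w s) (m : ℕ) :
    ∀ x ∈ Icc 0 b, w x ≤ M * ((C * x) ^ m / m !) := by
  induction m with
  | zero => simpa using hwM
  | succ m ih =>
    intro x hx
    have hsub : ∀ s ∈ Icc 0 x, s ∈ Icc 0 b := fun s hs => ⟨hs.1, hs.2.trans hx.2⟩
    have hbound : ∀ s ∈ Icc 0 x, R x s * w s ≤ C * (M * ((C * s) ^ m / m !)) := fun s hs => by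
      have : 0 ≤ M * ((C * s) ^ m / m !) := by have := hs.1; positivity
      calc R x s * w s ≤ R x s * (M * ((C * s) ^ m / m !)) :=
            mul_le_mul_of_nonneg_left (ih s (hsub s hs)) (hR0 x hx s hs)
        _ ≤ C * (M * ((C * s) ^ m / m !)) := mul_le_mul_of_nonneg_right (hRC x hx s hs) this
    calc w x ≤ ∫ s in 0..x, R x s * w s := hw x hx
      _ ≤ ∫ s in 0..x, C * (M * ((C * s) ^ m / m !)) :=
          intervalIntegral.integral_mono_on hx.1 (hint x hx)
            ((by fun_prop : Continuous _).intervalIntegrable _ _) hbound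
      _ = M * ((C * x) ^ (m + 1) / (m + 1)!) := by
          simp only [mul_pow, intervalIntegral.integral_const_mul, intervalIntegral.integral_div,
            integral_pow]
          push_cast [factorial_succ]
          field_simp
          ring

theorem nonpos_of_le_integral_mul (hC : 0 ≤ C) (hM : 0 ≤ M)
    (hR0 : ∀ x ∈ Icc 0 b, ∀ s ∈ Icc 0 x, 0 ≤ R x s)
    (hRC : ∀ x ∈ Icc 0 b, ∀ s ∈ Icc 0 x, R x s ≤ C)
    (hwM : ∀ x ∈ Icc 0 b, w x ≤ M)
    (hint : ∀ x ∈ Icc 0 b, IntervalIntegrable (fun s => R x s * w s) volume 0 x)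
    (hw : ∀ x ∈ Icc 0 b, w x ≤ ∫ s in 0..x, R x s * w s) :
    ∀ x ∈ Icc 0 b, w x ≤ 0 := fun x hx =>
  ge_of_tendsto' (by simpa using (FloorSemiring.tendsto_pow_div_factorial_atTop (C * x)).const_mul M)
    fun m => le_mul_pow_div_factorial_of_le_integral_mul hC hM hR0 hRC hwM hint hw m x hx

end VolterraIteration

theorem pow_mul_div_factorial_le {t a : ℝ} (ht0 : 0 ≤ t) (ht1 : t ≤ 1) (ha : 0 ≤ a) (n : ℕ) :
    t ^ n * a / n ! ≤ a :=
  div_le_self (mul_nonneg (pow_nonneg ht0 n) ha) (by exact_mod_cast n.factorial_pos) |>.trans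
    (mul_le_of_le_one_left ha (pow_le_one₀ ht0 ht1))

theorem intervalIntegrable_of_measurable_of_abs_le {w : ℝ → ℝ} {x M : ℝ} (hx : 0 ≤ x)
    (hw : Measurable w) (hwM : ∀ s ∈ Icc 0 x, |w s| ≤ M) : IntervalIntegrable w volume 0 x :=
  (intervalIntegrable_iff_integrableOn_Ioc_of_le hx).2 <|
    IntegrableOn.of_bound measure_Ioc_lt_top hw.aestronglyMeasurable M <|
      (ae_restrict_iff' measurableSet_Ioc).2 <| .of_forall fun s hs => hwM s (Ioc_subset_Icc_self hs)

theorem stmt10_general (k : ℕ) (x0 : ℝ) (hx0 : x0 ∈ Set.Ioo (0:ℝ) 1)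
    (B : ℕ → ℝ → ℝ)
    (hBnonneg : ∀ j < k, ∀ x ∈ Set.Ico (0:ℝ) 1, 0 ≤ B j x)
    (hBbdd : ∀ j < k, ∃ M : ℝ, ∀ x ∈ Set.Icc (0:ℝ) x0, B j x ≤ M)
    (R : ℝ → ℝ → ℝ)
    (hR : ∀ x s : ℝ, 0 ≤ s → s ≤ x → x ≤ x0 →
      R x s = ∑ j ∈ Finset.Icc 1 k, (x - s) ^ (j - 1) * B (k - j) x / ((j - 1).factorial : ℝ))
    (w : ℝ → ℝ) (hwmeas : Measurable w) (hwbdd : ∃ M : ℝ, ∀ x ∈ Set.Icc (0:ℝ) x0, |w x| ≤ M)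
    (hineq : ∀ x ∈ Set.Icc (0:ℝ) x0, w x ≤ ∫ s in (0:ℝ)..x, R x s * w s) :
    ∀ x ∈ Set.Icc (0:ℝ) x0, w x ≤ 0 := by
  obtain ⟨M, hM⟩ := hwbdd
  choose! N hN using hBbdd
  have hB0 : ∀ x ∈ Icc 0 x0, ∀ j ∈ Finset.Icc 1 k, 0 ≤ B (k - j) x := fun x hx j hj =>
    hBnonneg _ (by grind) x ⟨hx.1, hx.2.trans_lt hx0.2⟩
  have hR0 : ∀ x ∈ Icc 0 x0, ∀ s ∈ Icc 0 x, 0 ≤ R x s := fun x hx s hs => by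
    rw [hR x s hs.1 hs.2 hx.2]
    exact Finset.sum_nonneg fun j hj => by
      have := hB0 x hx j hj; have : 0 ≤ x - s := sub_nonneg.2 hs.2; positivity
  have hRC : ∀ x ∈ Icc 0 x0, ∀ s ∈ Icc 0 x, R x s ≤ ∑ j ∈ Finset.Icc 1 k, N (k - j) :=
    fun x hx s hs => by
      rw [hR x s hs.1 hs.2 hx.2]
      refine Finset.sum_le_sum fun j hj => (pow_mul_div_factorial_le (sub_nonneg.2 hs.2)
        (by linarith [hs.1, hx.2, hx0.2]) (hB0 x hx j hj) _).trans (hN _ (by grind) x hx)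
  have hint : ∀ x ∈ Icc 0 x0, IntervalIntegrable (fun s => R x s * w s) volume 0 x := by
    intro x hx
    refine ((intervalIntegrable_of_measurable_of_abs_le hx.1 hwmeas fun s hs =>
      hM s ⟨hs.1, hs.2.trans hx.2⟩).continuousOn_mul (Continuous.continuousOn (by fun_prop :
        Continuous fun s => ∑ j ∈ Finset.Icc 1 k, (x - s) ^ (j - 1) * B (k - j) x / (j - 1)!)))
      |>.congr fun s hs => ?_
    rw [uIoc_of_le hx.1] at hs
    exact congrArg (· * w s) (hR x s hs.1.le hs.2 hx.2).symm
  have hx0mem : x0 ∈ Icc 0 x0 := ⟨hx0.1.le, le_rfl⟩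
  exact nonpos_of_le_integral_mul ((hR0 x0 hx0mem x0 hx0mem).trans (hRC x0 hx0mem x0 hx0mem))
    ((abs_nonneg _).trans (hM 0 ⟨le_rfl, hx0.1.le⟩)) hR0 hRC
    (fun x hx => (le_abs_self _).trans (hM x hx)) hint hineq

theorem stmt10 (k : ℕ) (hk : 1 ≤ k) (x0 : ℝ) (hx0 : x0 ∈ Set.Ioo (0:ℝ) 1)
    (B : ℕ → ℝ → ℝ)
    (hBnonneg : ∀ j < k, ∀ x ∈ Set.Ico (0:ℝ) 1, 0 ≤ B j x)
    (hBbdd : ∀ j < k, ∃ M : ℝ, ∀ x ∈ Set.Icc (0:ℝ) x0, B j x ≤ M)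
    (R : ℝ → ℝ → ℝ)
    (hR : ∀ x s : ℝ, 0 ≤ s → s ≤ x → x ≤ x0 →
      R x s = ∑ j ∈ Finset.Icc 1 k, (x - s) ^ (j - 1) * B (k - j) x / ((j - 1).factorial : ℝ))
    (w : ℝ → ℝ) (hwmeas : Measurable w) (hwbdd : ∃ M : ℝ, ∀ x ∈ Set.Icc (0:ℝ) x0, |w x| ≤ M)
    (hineq : ∀ x ∈ Set.Icc (0:ℝ) x0, w x ≤ ∫ s in (0:ℝ)..x, R x s * w s) :
    ∀ x ∈ Set.Icc (0:ℝ) x0, w x ≤ 0 :=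
  stmt10_general k x0 hx0 B hBnonneg hBbdd R hR w hwmeas hwbdd hineq
end
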